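/- arXiv:2310.14995 — 7 statements merged into one kernel-verified Lean document; each statement's English description precedes it below -/
import Mathlib

section
/- Let γ ∈ 𝔻 and define w, v ∈ ℝ by w - iv = 2γ/(1-γ), and w^ι, v^ι by w^ι - iv^ι = 2γ^ι/(1-γ^ι) with γ^ι = -γ(1-γ̄)/(1-γ). Then 1 + w^ι = 1/(1+w) and v^ι/(2+w^ι) = -v/(2+w). -/
/-!
The Cayley transform `ζ = (1 + γ)/(1 - γ)` maps the unit disk onto the right half-plane, and the
hypotheses say exactly that `1 + w - i v = ζ(γ)` and `1 + w^ι - i v^ι = ζ(γ^ι)`. A direct computation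
shows that `ι` becomes the map `x + i y ↦ (1 - i y)/x` of the half-plane, so that `1 + w^ι = 1/(1 + w)`
and `v^ι = -v/(1 + w)`, from which both identities follow.
-/

open Complex

/-- The involution `γ ↦ γ^ι = -γ(1-γ̄)/(1-γ)`. -/
noncomputable def diskIota (γ : ℂ) : ℂ := -γ * (1 - starRingEnd ℂ γ) / (1 - γ)

noncomputable def cayley (γ : ℂ) : ℂ := (1 + γ) / (1 - γ)

lemma cayley_sub_one {γ : ℂ} (hγ : γ ≠ 1) : cayley γ - 1 = 2 * γ / (1 - γ) := by
  have : 1 - γ ≠ 0 := sub_ne_zero.mpr hγ.symm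
  rw [cayley]; field_simp; ring

lemma re_cayley (γ : ℂ) : (cayley γ).re = (1 - normSq γ) / normSq (1 - γ) := by
  simp only [cayley, div_re, normSq_apply]; simp; ring

lemma im_cayley (γ : ℂ) : (cayley γ).im = 2 * γ.im / normSq (1 - γ) := by
  simp only [cayley, div_im, normSq_apply]; simp; ring

lemma re_cayley_pos {γ : ℂ} (hγ : ‖γ‖ < 1) : 0 < (cayley γ).re := by
  have hγ1 : γ ≠ 1 := by rintro rfl; simp at hγ
  rw [re_cayley]
  refine div_pos ?_ (normSq_pos.mpr (sub_ne_zero.mpr hγ1.symm))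
  rw [normSq_eq_norm_sq]; nlinarith [norm_nonneg γ]

lemma one_sub_diskIota {γ : ℂ} (hγ : γ ≠ 1) : 1 - diskIota γ = (1 - normSq γ) / (1 - γ) := by
  have : 1 - γ ≠ 0 := sub_ne_zero.mpr hγ.symm
  rw [diskIota, ← mul_conj]; field_simp; ring

lemma one_add_diskIota {γ : ℂ} (hγ : γ ≠ 1) :
    1 + diskIota γ = (normSq (1 - γ) - 2 * γ.im * I) / (1 - γ) := by
  have : 1 - γ ≠ 0 := sub_ne_zero.mpr hγ.symm
  have hN : (normSq (1 - γ) : ℂ) = (1 - γ) * (1 - starRingEnd ℂ γ) := by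
    rw [← mul_conj]; simp
  have hIm : (2 * γ.im * I : ℂ) = γ - starRingEnd ℂ γ := by
    rw [sub_conj]; push_cast; ring
  rw [diskIota, hN, hIm]; field_simp; ring

lemma diskIota_ne_one {γ : ℂ} (hγ : ‖γ‖ ≠ 1) : diskIota γ ≠ 1 := by
  have hγ1 : γ ≠ 1 := by rintro rfl; simp at hγ
  have hn : normSq γ ≠ 1 := by
    rwa [normSq_eq_norm_sq, Ne, pow_eq_one_iff_of_nonneg (norm_nonneg γ) two_ne_zero]
  rw [ne_comm, ← sub_ne_zero, one_sub_diskIota hγ1]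
  exact div_ne_zero (by exact_mod_cast sub_ne_zero.mpr hn.symm) (sub_ne_zero.mpr hγ1.symm)

lemma cayley_diskIota {γ : ℂ} (hγ : γ ≠ 1) :
    cayley (diskIota γ) = (1 - (cayley γ).im * I) / (cayley γ).re := by
  have hγ1 : 1 - γ ≠ 0 := sub_ne_zero.mpr hγ.symm
  have hN : (normSq (1 - γ) : ℂ) ≠ 0 := by exact_mod_cast (normSq_pos.mpr hγ1).ne'
  rw [cayley, one_add_diskIota hγ, one_sub_diskIota hγ, div_div_div_cancel_right₀ hγ1,
    re_cayley, im_cayley]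
  push_cast
  field_simp

lemma re_cayley_diskIota {γ : ℂ} (hγ : γ ≠ 1) :
    (cayley (diskIota γ)).re = (cayley γ).re⁻¹ := by
  simp [cayley_diskIota hγ]

lemma im_cayley_diskIota {γ : ℂ} (hγ : γ ≠ 1) :
    (cayley (diskIota γ)).im = -(cayley γ).im / (cayley γ).re := by
  simp [cayley_diskIota hγ]

lemma one_add_eq_re_cayley_and_eq_neg_im_cayley {w v : ℝ} {γ : ℂ} (hγ : γ ≠ 1)
    (h : (w : ℂ) - I * v = 2 * γ / (1 - γ)) : 1 + w = (cayley γ).re ∧ v = -(cayley γ).im := by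
  rw [← cayley_sub_one hγ, Complex.ext_iff] at h
  simp only [sub_re, ofReal_re, mul_re, I_re, I_im, ofReal_im, one_re, sub_im, mul_im,
    one_im] at h
  constructor <;> linarith [h.1, h.2]

/-- if `w - iv = 2γ/(1-γ)` and `w^ι - iv^ι = 2γ^ι/(1-γ^ι)` with
`γ` in the open unit disk, then `1 + w^ι = 1/(1+w)` and `v^ι/(2+w^ι) = -v/(2+w)`. -/
theorem iota_wv_identities (γ : ℂ) (hγ : ‖γ‖ < 1)
    (w v wι vι : ℝ)
    (hwv : (w : ℂ) - Complex.I * v = 2 * γ / (1 - γ))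
    (hwvι : (wι : ℂ) - Complex.I * vι = 2 * diskIota γ / (1 - diskIota γ)) :
    1 + wι = (1 + w)⁻¹ ∧ vι / (2 + wι) = -(v / (2 + w)) := by
  have hγ1 : γ ≠ 1 := by rintro rfl; simp at hγ
  have hx := re_cayley_pos hγ
  obtain ⟨hw, hv⟩ := one_add_eq_re_cayley_and_eq_neg_im_cayley hγ1 hwv
  obtain ⟨hwι, hvι⟩ := one_add_eq_re_cayley_and_eq_neg_im_cayley (diskIota_ne_one hγ.ne) hwvι
  rw [re_cayley_diskIota hγ1] at hwι
  rw [im_cayley_diskIota hγ1] at hvι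
  set x := (cayley γ).re
  rw [show w = x - 1 by linarith, show wι = x⁻¹ - 1 by linarith, hv, hvι]
  constructor
  · ring
  · field_simp
    ring
end

section
/- With the modified Verblunsky relation γ_k = ᾱ_k ∏_{j=0}^{k-1} (1-γ̄_j)/(1-γ_j), one has α_0 = γ̄_0 and, for k ≥ 1, -α_k/α_{k-1} = γ̄_k / conj(γ_{k-1}^ι), where γ^ι = -γ(1-γ̄)/(1-γ), provided all quantities are nonzero. -/
open Complex Finset

/-!
Write `φ(γ) = (1-γ̄)/(1-γ)`. Conjugation inverts `φ(γ)`, so conjugating the relation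
`γ_k = ᾱ_k ∏_{j<k} φ(γ_j)` gives `α_k = γ̄_k ∏_{j<k} φ(γ_j)`. Consecutive products differ by the
single factor `φ(γ_{k-1})`, and `conj(γ^ι) = -γ̄ / φ(γ)`.
-/

open ComplexConjugate

section Phase

variable {K : Type*} [Field K] [StarRing K]

def phase (z : K) : K := (1 - conj z) / (1 - z)

theorem conj_phase (z : K) : conj (phase z) = (phase z)⁻¹ := by
  simp [phase, inv_div]

theorem phase_ne_zero {z : K} (hz : 1 - z ≠ 0) : phase z ≠ 0 := by
  refine div_ne_zero ?_ hz
  simpa only [map_sub, map_one] using (map_ne_zero (starRingEnd K)).mpr hz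

theorem eq_conj_mul_prod_phase {α γ : ℕ → K}
    (hγ : ∀ k, γ k = conj (α k) * ∏ j ∈ range k, phase (γ j)) (h1γ : ∀ k, 1 - γ k ≠ 0)
    (k : ℕ) : α k = conj (γ k) * ∏ j ∈ range k, phase (γ j) := by
  have hprod : ∏ j ∈ range k, phase (γ j) ≠ 0 :=
    prod_ne_zero_iff.mpr fun j _ => phase_ne_zero (h1γ j)
  have hconj : conj (γ k) = α k / ∏ j ∈ range k, phase (γ j) := by
    simp only [hγ k, map_mul, map_prod, starRingEnd_self_apply, conj_phase, prod_inv_distrib,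
      div_eq_mul_inv]
  rw [hconj, div_mul_cancel₀ _ hprod]

theorem div_eq_conj_mul_phase_div {α γ : ℕ → K}
    (hγ : ∀ k, γ k = conj (α k) * ∏ j ∈ range k, phase (γ j)) (h1γ : ∀ k, 1 - γ k ≠ 0)
    (m : ℕ) : α (m + 1) / α m = conj (γ (m + 1)) * phase (γ m) / conj (γ m) := by
  have hprod : ∏ j ∈ range m, phase (γ j) ≠ 0 :=
    prod_ne_zero_iff.mpr fun j _ => phase_ne_zero (h1γ j)
  rw [eq_conj_mul_prod_phase hγ h1γ, eq_conj_mul_prod_phase hγ h1γ, prod_range_succ,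
    ← mul_assoc, mul_right_comm, mul_div_mul_right _ _ hprod]

end Phase

theorem conj_diskIota (γ : ℂ) : conj (diskIota γ) = -conj γ / phase γ := by
  simp [diskIota, phase, div_div_eq_mul_div]

theorem alpha_ratio_iota_general (α γ : ℕ → ℂ)
    (hγ : ∀ k, γ k = starRingEnd ℂ (α k) *
      ∏ j ∈ Finset.range k, (1 - starRingEnd ℂ (γ j)) / (1 - γ j))
    (h1γ : ∀ k, 1 - γ k ≠ 0) :
    α 0 = starRingEnd ℂ (γ 0) ∧
    ∀ k, 1 ≤ k →
      -(α k / α (k - 1)) = starRingEnd ℂ (γ k) / starRingEnd ℂ (diskIota (γ (k - 1))) := by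
  refine ⟨by simpa using eq_conj_mul_prod_phase hγ h1γ 0, fun k hk => ?_⟩
  obtain ⟨m, rfl⟩ := Nat.exists_eq_add_of_le' hk
  rw [Nat.add_sub_cancel, div_eq_conj_mul_phase_div hγ h1γ, conj_diskIota, neg_div, div_neg,
    div_div_eq_mul_div]

/-- with `γ_k = ᾱ_k ∏_{j<k} (1-γ̄_j)/(1-γ_j)` one has `α_0 = γ̄_0`
and, for `k ≥ 1`, `-α_k/α_{k-1} = γ̄_k / conj(γ_{k-1}^ι)`, provided all
quantities involved are nonzero. -/
theorem alpha_ratio_iota (α γ : ℕ → ℂ)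
    (hγ : ∀ k, γ k = starRingEnd ℂ (α k) *
      ∏ j ∈ Finset.range k, (1 - starRingEnd ℂ (γ j)) / (1 - γ j))
    (hαne : ∀ k, α k ≠ 0)
    (hγne : ∀ k, γ k ≠ 0)
    (h1γ : ∀ k, 1 - γ k ≠ 0)
    (h1γc : ∀ k, 1 - starRingEnd ℂ (γ k) ≠ 0) :
    α 0 = starRingEnd ℂ (γ 0) ∧
    ∀ k, 1 ≤ k →
      -(α k / α (k - 1)) = starRingEnd ℂ (γ k) / starRingEnd ℂ (diskIota (γ (k - 1))) :=
  alpha_ratio_iota_general α γ hγ h1γ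
end

section
/- Let R(t) = Xᵀ(t)X(t)/(2 det X(t)) with X(t) = [[1, -x(t)],[0, y(t)]] for a path x+iy into the upper half plane, and suppose the Dirac operator τ f = R^{-1} J f' with boundary vectors 𝔲_0, 𝔲_1 ∈ ℝ² satisfying 𝔲_0ᵀ J 𝔲_1 = 1 is invertible. Then the integral kernel K(s,t) = 𝔲_0 𝔲_1ᵀ 1_{s<t} R(t) + 𝔲_1 𝔲_0ᵀ 1_{s≥t} R(t) defines a right inverse of τ on smooth compactly supported test functions: i.e., for f continuous, the function u(s) = ∫_I K(s,t) f(t) dt satisfies R^{-1}(s) J u'(s) = f(s) almost everywhere. -/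
/-! For `q ≤ s` the kernels `K(s,·)` and `K(q,·)` differ only on `(q, s]`, where
`K(s,t) - K(q,t) = (𝔲₁𝔲₀ᵀ - 𝔲₀𝔲₁ᵀ) R(t)`. Hence `u(s) - u(q) = ∫_q^s (𝔲₁𝔲₀ᵀ - 𝔲₀𝔲₁ᵀ) R f`, and the
Lebesgue differentiation theorem gives `u' = (𝔲₁𝔲₀ᵀ - 𝔲₀𝔲₁ᵀ) R f` almost everywhere. Finally
`J (𝔲₁𝔲₀ᵀ - 𝔲₀𝔲₁ᵀ) = (𝔲₀ᵀ J 𝔲₁) • 1 = 1`, so `R⁻¹ J u' = f`. -/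

open Matrix MeasureTheory

/-- The weight function `R = XᵀX/(2 det X)` built out of a path `x + iy` in the
upper half plane, where `X = [[1,-x],[0,y]]`. -/
noncomputable def diracWeight (x y : ℝ → ℝ) (t : ℝ) : Matrix (Fin 2) (Fin 2) ℝ :=
  (2 * (!![1, -x t; 0, y t] : Matrix (Fin 2) (Fin 2) ℝ).det)⁻¹ •
    ((!![1, -x t; 0, y t] : Matrix (Fin 2) (Fin 2) ℝ)ᵀ * !![1, -x t; 0, y t])

/-- The integral kernel `K(s,t) = (𝔲₀𝔲₁ᵀ 1_{s<t} + 𝔲₁𝔲₀ᵀ 1_{s≥t}) R(t)` of `τ⁻¹`. -/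
noncomputable def diracKernel (x y : ℝ → ℝ) (u0 u1 : Fin 2 → ℝ) (s t : ℝ) :
    Matrix (Fin 2) (Fin 2) ℝ :=
  (if s < t then vecMulVec u0 u1 else vecMulVec u1 u0) * diracWeight x y t

open Set Filter
open scoped Topology

theorem ae_hasDerivAt_of_sub_eq_intervalIntegral {E : Type*} [NormedAddCommGroup E]
    [NormedSpace ℝ E] [CompleteSpace E] {F h : ℝ → E} {a b : ℝ}
    (hh : ∀ q r, a < q → q ≤ r → r < b → IntegrableOn h (Ioc q r))
    (hF : ∀ q s, a < q → q ≤ s → s < b → F s - F q = ∫ t in q..s, h t) :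
    ∀ᵐ s, s ∈ Ioo a b → HasDerivAt F (h s) s := by
  have hprim : ∀ᵐ s, ∀ q r : ℚ, a < q → (q : ℝ) ≤ r → (r : ℝ) < b → s ∈ uIcc (q : ℝ) r →
      HasDerivAt (fun s' => ∫ t in (q : ℝ)..s', h t) (h s) s := by
    simp only [ae_all_iff, eventually_imp_distrib_left]
    intro q r hq hqr hr
    have hint := (intervalIntegrable_iff_integrableOn_Ioc_of_le hqr).mpr (hh q r hq hqr hr)
    filter_upwards [hint.ae_hasDerivAt_integral] with s hs hsqr
      using hs hsqr q left_mem_uIcc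
  filter_upwards [hprim] with s hs ⟨has, hsb⟩
  obtain ⟨q, haq, hqs⟩ := exists_rat_btwn has
  obtain ⟨r, hsr, hrb⟩ := exists_rat_btwn hsb
  have hderiv := hs q r haq (hqs.trans hsr).le hrb (Icc_subset_uIcc ⟨hqs.le, hsr.le⟩)
  refine (hderiv.const_add (F q)).congr_of_eventuallyEq ?_
  filter_upwards [Ioo_mem_nhds hqs hsb] with s' hs'
  exact eq_add_of_sub_eq' (hF q s' haq hs'.1.le hs'.2)

theorem det_diracWeight {x y : ℝ → ℝ} {t : ℝ} (hyt : y t ≠ 0) :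
    (diracWeight x y t).det = 1 / 4 := by
  have hdetX : (!![1, -x t; 0, y t] : Matrix (Fin 2) (Fin 2) ℝ).det = y t := by
    simp [det_fin_two_of]
  rw [diracWeight, det_smul, det_mul, det_transpose, hdetX, Fintype.card_fin]
  field_simp
  ring

theorem diracWeight_inv_mulVec_mulVec {x y : ℝ → ℝ} {t : ℝ} (hyt : y t ≠ 0) (v : Fin 2 → ℝ) :
    (diracWeight x y t)⁻¹ *ᵥ (diracWeight x y t *ᵥ v) = v := by
  rw [mulVec_mulVec, nonsing_inv_mul _ (by simp [det_diracWeight hyt]), one_mulVec]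

theorem mul_vecMulVec_sub_vecMulVec (u v : Fin 2 → ℝ) :
    (!![0, -1; 1, 0] : Matrix (Fin 2) (Fin 2) ℝ) * (vecMulVec v u - vecMulVec u v) =
      (u ⬝ᵥ ((!![0, -1; 1, 0] : Matrix (Fin 2) (Fin 2) ℝ) *ᵥ v)) • 1 := by
  ext i j
  fin_cases i <;> fin_cases j <;>
    simp [mul_apply, vecMulVec_apply, dotProduct, mulVec, Fin.sum_univ_two] <;> ring

section DiracKernel

variable (x y : ℝ → ℝ) (u0 u1 : Fin 2 → ℝ) (f : ℝ → Fin 2 → ℝ)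

theorem diracKernel_mulVec_sub_diracKernel_mulVec {q s : ℝ} (hqs : q ≤ s) (t : ℝ) :
    diracKernel x y u0 u1 s t *ᵥ f t - diracKernel x y u0 u1 q t *ᵥ f t =
      (Ioc q s).indicator
        (fun t => ((vecMulVec u1 u0 - vecMulVec u0 u1) * diracWeight x y t) *ᵥ f t) t := by
  by_cases hst : s < t
  · rw [indicator_of_notMem (fun ht => hst.not_ge ht.2)]
    simp [diracKernel, hst, hqs.trans_lt hst]
  by_cases hqt : q < t
  · rw [indicator_of_mem (show t ∈ Ioc q s from ⟨hqt, not_lt.mp hst⟩)]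
    simp [diracKernel, hst, hqt, sub_mul, sub_mulVec]
  · rw [indicator_of_notMem (fun ht => hqt ht.1)]
    simp [diracKernel, hst, hqt]

variable {x y u0 u1 f} {I : Set ℝ} {q s : ℝ}

theorem integrableOn_Ioc_of_integrableOn_diracKernel
    (hq : IntegrableOn (fun t => diracKernel x y u0 u1 q t *ᵥ f t) I)
    (hs : IntegrableOn (fun t => diracKernel x y u0 u1 s t *ᵥ f t) I)
    (hqs : q ≤ s) (hsub : Ioc q s ⊆ I) :
    IntegrableOn (fun t => ((vecMulVec u1 u0 - vecMulVec u0 u1) * diracWeight x y t) *ᵥ f t)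
      (Ioc q s) := by
  refine ((hs.sub hq).mono_set hsub).congr_fun (fun t ht => ?_) measurableSet_Ioc
  rw [Pi.sub_apply, diracKernel_mulVec_sub_diracKernel_mulVec x y u0 u1 f hqs,
    indicator_of_mem ht]

theorem integral_diracKernel_sub_integral_diracKernel
    (hq : IntegrableOn (fun t => diracKernel x y u0 u1 q t *ᵥ f t) I)
    (hs : IntegrableOn (fun t => diracKernel x y u0 u1 s t *ᵥ f t) I)
    (hqs : q ≤ s) (hsub : Ioc q s ⊆ I) :
    (∫ t in I, diracKernel x y u0 u1 s t *ᵥ f t) - ∫ t in I, diracKernel x y u0 u1 q t *ᵥ f t =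
      ∫ t in q..s, ((vecMulVec u1 u0 - vecMulVec u0 u1) * diracWeight x y t) *ᵥ f t := by
  rw [← integral_sub hs hq, intervalIntegral.integral_of_le hqs]
  simp_rw [diracKernel_mulVec_sub_diracKernel_mulVec x y u0 u1 f hqs]
  rw [setIntegral_indicator measurableSet_Ioc, inter_eq_right.mpr hsub]

end DiracKernel

theorem dirac_kernel_right_inverse_general
    (I : Set ℝ) (hI : I = Set.Ico (0 : ℝ) 1 ∨ I = Set.Ioc (0 : ℝ) 1)
    (x y : ℝ → ℝ)
    (hypos : ∀ t ∈ I, 0 < y t)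
    (u0 u1 : Fin 2 → ℝ)
    (hnorm : u0 ⬝ᵥ ((!![0, -1; 1, 0] : Matrix (Fin 2) (Fin 2) ℝ) *ᵥ u1) = 1)
    (f : ℝ → Fin 2 → ℝ)
    (hInt : ∀ s ∈ I, IntegrableOn (fun t => diracKernel x y u0 u1 s t *ᵥ f t) I volume) :
    ∀ᵐ s ∂(volume.restrict I),
      ∃ u' : Fin 2 → ℝ,
        HasDerivAt (fun s' => ∫ t in I, diracKernel x y u0 u1 s' t *ᵥ f t) u' s ∧
        (diracWeight x y s)⁻¹ *ᵥ ((!![0, -1; 1, 0] : Matrix (Fin 2) (Fin 2) ℝ) *ᵥ u') = f s := by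
  have hIoo : Ioo (0 : ℝ) 1 ⊆ I := by
    rcases hI with rfl | rfl
    exacts [Ioo_subset_Ico_self, Ioo_subset_Ioc_self]
  have hae : Ioo (0 : ℝ) 1 =ᵐ[volume] I := by
    rcases hI with rfl | rfl
    exacts [Ioo_ae_eq_Ico, Ioo_ae_eq_Ioc]
  have hsub : ∀ q s, 0 < q → s < 1 → Ioc q s ⊆ I := fun q s hq hs t ht =>
    hIoo ⟨hq.trans ht.1, ht.2.trans_lt hs⟩
  have hmem : ∀ q s, 0 < q → q ≤ s → s < 1 → q ∈ I ∧ s ∈ I := fun q s hq hqs hs =>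
    ⟨hIoo ⟨hq, hqs.trans_lt hs⟩, hIoo ⟨hq.trans_le hqs, hs⟩⟩
  have hderiv := ae_hasDerivAt_of_sub_eq_intervalIntegral (a := 0) (b := 1)
    (F := fun s => ∫ t in I, diracKernel x y u0 u1 s t *ᵥ f t)
    (fun q s hq hqs hs => integrableOn_Ioc_of_integrableOn_diracKernel
      (hInt q (hmem q s hq hqs hs).1) (hInt s (hmem q s hq hqs hs).2) hqs (hsub q s hq hs))
    (fun q s hq hqs hs => integral_diracKernel_sub_integral_diracKernel
      (hInt q (hmem q s hq hqs hs).1) (hInt s (hmem q s hq hqs hs).2) hqs (hsub q s hq hs))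
  rw [← ae_restrict_congr_set hae, ae_restrict_iff' measurableSet_Ioo]
  filter_upwards [hderiv] with s hs hs01
  refine ⟨_, hs hs01, ?_⟩
  rw [mulVec_mulVec (f s), ← Matrix.mul_assoc, mul_vecMulVec_sub_vecMulVec, hnorm, one_smul,
    one_mul]
  exact diracWeight_inv_mulVec_mulVec (hypos s (hIoo hs01)).ne' (f s)

/-- the kernel `K(s,t)` gives a right inverse of the Dirac operator
`τ f = R⁻¹ J f'`: for continuous `f`, the function `u(s) = ∫_I K(s,t) f(t) dt`
satisfies `R(s)⁻¹ J u'(s) = f(s)` almost everywhere on `I`. -/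
theorem dirac_kernel_right_inverse
    (I : Set ℝ) (hI : I = Set.Ico (0 : ℝ) 1 ∨ I = Set.Ioc (0 : ℝ) 1)
    (x y : ℝ → ℝ) (hx : Measurable x) (hy : Measurable y)
    (hypos : ∀ t ∈ I, 0 < y t)
    (u0 u1 : Fin 2 → ℝ) (hu0 : u0 ≠ 0) (hu1 : u1 ≠ 0)
    (hnorm : u0 ⬝ᵥ ((!![0, -1; 1, 0] : Matrix (Fin 2) (Fin 2) ℝ) *ᵥ u1) = 1)
    -- integrability conditions (Assumption 1 of the paper)
    (hHS : ∫⁻ t in I, ∫⁻ s in I ∩ Set.Iic t,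
        ENNReal.ofReal ((u0 ⬝ᵥ (diracWeight x y s *ᵥ u0)) *
          (u1 ⬝ᵥ (diracWeight x y t *ᵥ u1))) < ⊤)
    (hbdy : IntegrableOn (fun s => ‖diracWeight x y s *ᵥ u1‖) I volume ∨
      IntegrableOn (fun s => ‖diracWeight x y s *ᵥ u0‖) I volume)
    (f : ℝ → Fin 2 → ℝ) (hf : Continuous f)
    (hInt : ∀ s ∈ I, IntegrableOn (fun t => diracKernel x y u0 u1 s t *ᵥ f t) I volume) :
    ∀ᵐ s ∂(volume.restrict I),
      ∃ u' : Fin 2 → ℝ,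
        HasDerivAt (fun s' => ∫ t in I, diracKernel x y u0 u1 s' t *ᵥ f t) u' s ∧
        (diracWeight x y s)⁻¹ *ᵥ ((!![0, -1; 1, 0] : Matrix (Fin 2) (Fin 2) ℝ) *ᵥ u') = f s :=
  dirac_kernel_right_inverse_general I hI x y hypos u0 u1 hnorm f hInt
end

section
/- Under the setup of the Dirac operator τ = Dir(R, 𝔲_0, 𝔲_1) with kernel K_{τ^{-1}}(s,t) = (𝔲_0𝔲_1ᵀ1_{s<t} + 𝔲_1𝔲_0ᵀ1_{s≥t})R(t), the squared Hilbert–Schmidt norm of τ^{-1} equals 2∫_0^1 ∫_0^t (𝔲_0ᵀ R(s) 𝔲_0)(𝔲_1ᵀ R(t) 𝔲_1) ds dt. -/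
/-!
With `X = [[1,-x],[0,y]]` we have `XᵀX = 2 det X • R`, so `|𝔞ⱼ(s)|² = 2 𝔲ⱼᵀR(s)𝔲ⱼ`. Each
value of the kernel is a rank-one matrix `½ 𝔞ᵢ(s)𝔞ⱼ(t)ᵀ`, with squared Frobenius norm
`¼ |𝔞ᵢ(s)|² |𝔞ⱼ(t)|²`; hence the squared kernel is `(𝔲₀ᵀR(s)𝔲₀)(𝔲₁ᵀR(t)𝔲₁)` above the
diagonal and its mirror image below it. The diagonal is null, so Tonelli turns the two
triangles into twice the lower one.
-/

open Matrix MeasureTheory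

/-- `𝔞_j(s) = X(s)𝔲_j/√(det X(s))`. -/
noncomputable def diracA (x y : ℝ → ℝ) (u : Fin 2 → ℝ) (s : ℝ) : Fin 2 → ℝ :=
  (Real.sqrt ((!![1, -x s; 0, y s] : Matrix (Fin 2) (Fin 2) ℝ).det))⁻¹ •
    ((!![1, -x s; 0, y s] : Matrix (Fin 2) (Fin 2) ℝ) *ᵥ u)

/-- The kernel of the conjugated inverse `r τ`,
`K(s,t) = ½(𝔞₀(s)𝔞₁(t)ᵀ 1_{s<t} + 𝔞₁(s)𝔞₀(t)ᵀ 1_{s≥t})`. -/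
noncomputable def diracResKernel (x y : ℝ → ℝ) (u0 u1 : Fin 2 → ℝ) (s t : ℝ) :
    Matrix (Fin 2) (Fin 2) ℝ :=
  (2 : ℝ)⁻¹ • (if s < t then vecMulVec (diracA x y u0 s) (diracA x y u1 t)
    else vecMulVec (diracA x y u1 s) (diracA x y u0 t))

lemma smul_mulVec_dotProduct_self {n : Type*} [Fintype n] (c : ℝ) (X : Matrix n n ℝ)
    (u : n → ℝ) :
    (c • X *ᵥ u) ⬝ᵥ (c • X *ᵥ u) = c ^ 2 * (u ⬝ᵥ ((Xᵀ * X) *ᵥ u)) := by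
  rw [smul_dotProduct, dotProduct_smul, ← mulVec_mulVec, dotProduct_mulVec u, vecMul_transpose,
    smul_eq_mul, smul_eq_mul]
  ring

lemma sum_sq_smul_vecMulVec {m n : Type*} [Fintype m] [Fintype n] (c : ℝ) (a : m → ℝ)
    (b : n → ℝ) :
    ∑ i, ∑ j, ((c • vecMulVec a b) i j) ^ 2 = c ^ 2 * (a ⬝ᵥ a) * (b ⬝ᵥ b) := by
  rw [mul_assoc, dotProduct, dotProduct, Fintype.sum_mul_sum, Finset.mul_sum]
  simp only [Finset.mul_sum, Matrix.smul_apply, vecMulVec_apply, smul_eq_mul]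
  exact Finset.sum_congr rfl fun i _ => Finset.sum_congr rfl fun j _ => by ring

lemma det_fin_two_of_one_neg_zero (a b : ℝ) : (!![1, -a; 0, b] : Matrix (Fin 2) (Fin 2) ℝ).det = b := by
  simp [det_fin_two_of]

lemma dotProduct_diracWeight_mulVec (x y : ℝ → ℝ) (u : Fin 2 → ℝ) (t : ℝ) :
    u ⬝ᵥ (diracWeight x y t *ᵥ u) = ((u 0 - x t * u 1) ^ 2 + (y t * u 1) ^ 2) / (2 * y t) := by
  rw [diracWeight, smul_mulVec, dotProduct_smul, det_fin_two_of_one_neg_zero, ← mulVec_mulVec,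
    dotProduct_mulVec, vecMul_transpose, smul_eq_mul]
  simp only [dotProduct, mulVec, Fin.sum_univ_two, of_apply, cons_val', cons_val_zero,
    cons_val_one, cons_val_fin_one]
  ring

lemma diracA_dotProduct_self (x y : ℝ → ℝ) (u : Fin 2 → ℝ) {s : ℝ} (hs : 0 ≤ y s) :
    diracA x y u s ⬝ᵥ diracA x y u s = 2 * (u ⬝ᵥ (diracWeight x y s *ᵥ u)) := by
  rw [diracA, diracWeight, smul_mulVec_dotProduct_self, smul_mulVec, dotProduct_smul,
    det_fin_two_of_one_neg_zero, inv_pow, Real.sq_sqrt hs, smul_eq_mul, mul_inv, ← mul_assoc, ← mul_assoc]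
  rcases hs.eq_or_lt with h | h
  · simp [← h]
  · field_simp

section Triangle

open Set ENNReal

variable {α : Type*} [MeasurableSpace α] [TopologicalSpace α] [LinearOrder α]
  [OrderClosedTopology α] [OpensMeasurableSpace α] {μ : Measure α} {I : Set α}

lemma setLIntegral_setLIntegral_ite_lt_eq_inter_Iio [SecondCountableTopology α] [SFinite μ]
    {f : α → α → ℝ≥0∞} (hf : Measurable (Function.uncurry f)) :
    ∫⁻ s in I, ∫⁻ t in I, (if s < t then f s t else 0) ∂μ ∂μ
      = ∫⁻ t in I, ∫⁻ s in I ∩ Iio t, f s t ∂μ ∂μ := by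
  have hmeas : Measurable fun p : α × α => if p.1 < p.2 then f p.1 p.2 else 0 :=
    hf.ite (measurableSet_lt measurable_fst measurable_snd) measurable_const
  rw [lintegral_lintegral_swap hmeas.aemeasurable]
  refine lintegral_congr fun t => ?_
  have hind : (fun s => if s < t then f s t else 0) = (Iio t).indicator (f · t) := by
    ext s; simp [indicator_apply]
  rw [hind, lintegral_indicator measurableSet_Iio, Measure.restrict_restrict measurableSet_Iio,
    inter_comm]

lemma setLIntegral_ite_lt_zero_eq_inter_Iio [NullSingletonClass μ] (s : α) (f : α → ℝ≥0∞) :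
    ∫⁻ t in I, (if s < t then 0 else f t) ∂μ = ∫⁻ t in I ∩ Iio s, f t ∂μ := by
  have hind : (fun t => if s < t then 0 else f t) = (Iic s).indicator f := by
    ext t; simp only [indicator_apply, mem_Iic, ← not_lt, ite_not]
  rw [hind, lintegral_indicator measurableSet_Iic, Measure.restrict_restrict measurableSet_Iic,
    inter_comm]
  exact setLIntegral_congr (Filter.EventuallyEq.rfl.inter Iio_ae_eq_Iic.symm)

lemma setLIntegral_setLIntegral_ite_lt_symm [SecondCountableTopology α] [SFinite μ]
    [NullSingletonClass μ] {f g : α → ℝ≥0∞} (hf : Measurable f) (hg : Measurable g) :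
    ∫⁻ s in I, ∫⁻ t in I, (if s < t then f s * g t else g s * f t) ∂μ ∂μ
      = 2 * ∫⁻ t in I, ∫⁻ s in I ∩ Iio t, f s * g t ∂μ ∂μ := by
  have hfg : Measurable (Function.uncurry fun s t => f s * g t) :=
    (hf.comp measurable_fst).mul (hg.comp measurable_snd)
  have hupper : Measurable fun p : α × α => if p.1 < p.2 then f p.1 * g p.2 else 0 :=
    hfg.ite (measurableSet_lt measurable_fst measurable_snd) measurable_const
  have hsplit : ∀ s t, (if s < t then f s * g t else g s * f t)
      = (if s < t then f s * g t else 0) + (if s < t then 0 else g s * f t) := by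
    intro s t; split_ifs <;> simp
  calc _ = (∫⁻ s in I, ∫⁻ t in I, (if s < t then f s * g t else 0) ∂μ ∂μ)
          + ∫⁻ s in I, ∫⁻ t in I, (if s < t then 0 else g s * f t) ∂μ ∂μ := by
        simp_rw [hsplit]
        refine (lintegral_congr fun s => lintegral_add_left ?_ _).trans
          (lintegral_add_left hupper.lintegral_prod_right' _)
        exact hupper.comp measurable_prodMk_left
    _ = (∫⁻ t in I, ∫⁻ s in I ∩ Iio t, f s * g t ∂μ ∂μ)
          + ∫⁻ s in I, ∫⁻ t in I ∩ Iio s, g s * f t ∂μ ∂μ := by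
        rw [setLIntegral_setLIntegral_ite_lt_eq_inter_Iio hfg,
          lintegral_congr fun s => setLIntegral_ite_lt_zero_eq_inter_Iio s _]
    _ = _ := by
        rw [two_mul]
        exact congrArg₂ _ rfl (lintegral_congr fun s => lintegral_congr fun t => mul_comm _ _)

end Triangle

lemma sum_sq_diracResKernel (x y : ℝ → ℝ) (u0 u1 : Fin 2 → ℝ) {s t : ℝ} (hs : 0 ≤ y s)
    (ht : 0 ≤ y t) :
    ∑ i, ∑ j, (diracResKernel x y u0 u1 s t i j) ^ 2
      = if s < t then (u0 ⬝ᵥ (diracWeight x y s *ᵥ u0)) * (u1 ⬝ᵥ (diracWeight x y t *ᵥ u1))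
        else (u1 ⬝ᵥ (diracWeight x y s *ᵥ u1)) * (u0 ⬝ᵥ (diracWeight x y t *ᵥ u0)) := by
  unfold diracResKernel
  split_ifs <;>
  · rw [sum_sq_smul_vecMulVec, diracA_dotProduct_self _ _ _ hs, diracA_dotProduct_self _ _ _ ht]
    ring

lemma measurable_dotProduct_diracWeight_mulVec {x y : ℝ → ℝ} (hx : Measurable x)
    (hy : Measurable y) (u : Fin 2 → ℝ) :
    Measurable fun t => u ⬝ᵥ (diracWeight x y t *ᵥ u) := by
  simp only [dotProduct_diracWeight_mulVec]
  fun_prop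

lemma dotProduct_diracWeight_mulVec_nonneg (x y : ℝ → ℝ) (u : Fin 2 → ℝ) {t : ℝ}
    (ht : 0 ≤ y t) : 0 ≤ u ⬝ᵥ (diracWeight x y t *ᵥ u) := by
  rw [dotProduct_diracWeight_mulVec]
  positivity

theorem dirac_inverse_HS_norm_general
    (I : Set ℝ) (hI : I = Set.Ico (0 : ℝ) 1 ∨ I = Set.Ioc (0 : ℝ) 1)
    (x y : ℝ → ℝ) (hx : Measurable x) (hy : Measurable y)
    (hypos : ∀ t ∈ I, 0 < y t)
    (u0 u1 : Fin 2 → ℝ) :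
    ∫⁻ s in I, ∫⁻ t in I,
        ENNReal.ofReal (∑ i : Fin 2, ∑ j : Fin 2, (diracResKernel x y u0 u1 s t i j) ^ 2)
      = 2 * ∫⁻ t in I, ∫⁻ s in I ∩ Set.Iio t,
          ENNReal.ofReal ((u0 ⬝ᵥ (diracWeight x y s *ᵥ u0)) *
            (u1 ⬝ᵥ (diracWeight x y t *ᵥ u1))) := by
  have hI_meas : MeasurableSet I := by
    rcases hI with rfl | rfl
    exacts [measurableSet_Ico, measurableSet_Ioc]
  set q : (Fin 2 → ℝ) → ℝ → ENNReal :=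
    fun u t => ENNReal.ofReal (u ⬝ᵥ (diracWeight x y t *ᵥ u))
  have hq_mul : ∀ u v, ∀ s ∈ I, ∀ t, ENNReal.ofReal
      ((u ⬝ᵥ (diracWeight x y s *ᵥ u)) * (v ⬝ᵥ (diracWeight x y t *ᵥ v))) = q u s * q v t :=
    fun u v s hs t => ENNReal.ofReal_mul
      (dotProduct_diracWeight_mulVec_nonneg x y u (hypos s hs).le)
  have hq_meas : ∀ u, Measurable (q u) :=
    fun u => (measurable_dotProduct_diracWeight_mulVec hx hy u).ennreal_ofReal
  calc _ = ∫⁻ s in I, ∫⁻ t in I, (if s < t then q u0 s * q u1 t else q u1 s * q u0 t) := by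
        refine setLIntegral_congr_fun hI_meas fun s hs => setLIntegral_congr_fun hI_meas
          fun t ht => ?_
        rw [sum_sq_diracResKernel x y u0 u1 (hypos s hs).le (hypos t ht).le]
        split_ifs <;> exact hq_mul _ _ s hs t
    _ = 2 * ∫⁻ t in I, ∫⁻ s in I ∩ Set.Iio t, q u0 s * q u1 t :=
        setLIntegral_setLIntegral_ite_lt_symm (hq_meas u0) (hq_meas u1)
    _ = _ := by
        congr 1
        exact lintegral_congr fun t => (setLIntegral_congr_fun
          (hI_meas.inter measurableSet_Iio) fun s hs => hq_mul u0 u1 s hs.1 t).symm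

/-- the squared Hilbert–Schmidt norm of `τ⁻¹` (computed as the
double integral of the squared Frobenius norm of the kernel of the conjugated
operator `r τ`, which has the same HS norm) equals
`2∫₀¹∫₀ᵗ (𝔲₀ᵀ R(s) 𝔲₀)(𝔲₁ᵀ R(t) 𝔲₁) ds dt`. -/
theorem dirac_inverse_HS_norm
    (I : Set ℝ) (hI : I = Set.Ico (0 : ℝ) 1 ∨ I = Set.Ioc (0 : ℝ) 1)
    (x y : ℝ → ℝ) (hx : Measurable x) (hy : Measurable y)
    (hypos : ∀ t ∈ I, 0 < y t)
    (u0 u1 : Fin 2 → ℝ)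
    (hnorm : u0 ⬝ᵥ ((!![0, -1; 1, 0] : Matrix (Fin 2) (Fin 2) ℝ) *ᵥ u1) = 1) :
    ∫⁻ s in I, ∫⁻ t in I,
        ENNReal.ofReal (∑ i : Fin 2, ∑ j : Fin 2, (diracResKernel x y u0 u1 s t i j) ^ 2)
      = 2 * ∫⁻ t in I, ∫⁻ s in I ∩ Set.Iio t,
          ENNReal.ofReal ((u0 ⬝ᵥ (diracWeight x y s *ᵥ u0)) *
            (u1 ⬝ᵥ (diracWeight x y t *ᵥ u1))) :=
  dirac_inverse_HS_norm_general I hI x y hx hy hypos u0 u1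
end

section
/- Let Q be a 2×2 real orthogonal matrix with determinant 1 and let 𝒬 be the corresponding Möbius transformation of the closed upper half-plane. If τ = Dir(R, 𝔲_0, 𝔲_1) is a Dirac operator with generating path x+iy and weight function R, then QτQ^{-1} is a Dirac operator with generating path 𝒬(x+iy), weight function QRQᵀ, and boundary conditions Q𝔲_0, Q𝔲_1; in particular the two operators have the same spectrum and the same integral trace ∫_0^1 𝔲_0ᵀ R(s) 𝔲_1 ds = ∫_0^1 (Q𝔲_0)ᵀ QR(s)Qᵀ (Q𝔲_1) ds. -/
open Matrix MeasureTheory Complex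

/-- The Möbius action of a real 2×2 matrix `Q` on a point of the upper half plane. -/
noncomputable def mobiusAct (Q : Matrix (Fin 2) (Fin 2) ℝ) (z : ℂ) : ℂ :=
  ((Q 0 0 : ℂ) * z + (Q 0 1 : ℂ)) / ((Q 1 0 : ℂ) * z + (Q 1 1 : ℂ))

/-!
`R(z)`, for `z = x + iy`, is the matrix of the quadratic form `v ↦ |v₀ - z v₁|² / (2 Im z)`.
Writing `z = p / q`, this is `|v₀ q - v₁ p|² / (2 Im (p q̄))`, which is homogeneous in `(p, q)`.
For `g ∈ SL(2, ℝ)` the Möbius image `g z` is `p / q` with `(p, q) = g (z, 1)`, and then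
`Im (p q̄) = Im z` while the form is the old one composed with `g⁻¹`: `R(g z) = g⁻ᵀ R(z) g⁻¹`.
For `Q ∈ SO(2)` this is `Q R(z) Qᵀ`, and orthogonality of `Q` leaves the trace integrand unchanged.
-/

open ComplexConjugate

noncomputable def weightAt (z : ℂ) : Matrix (Fin 2) (Fin 2) ℝ :=
  (2 * z.im)⁻¹ • !![1, -z.re; -z.re, normSq z]

def weightNumerator (p q : ℂ) : Matrix (Fin 2) (Fin 2) ℝ :=
  !![normSq q, -(p * conj q).re; -(p * conj q).re, normSq p]

theorem diracWeight_eq_weightAt (x y : ℝ → ℝ) (t : ℝ) :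
    diracWeight x y t = weightAt (x t + y t * I) := by
  ext i j
  fin_cases i <;> fin_cases j <;> simp [diracWeight, weightAt, normSq_apply, mul_apply]

theorem weightAt_div (p : ℂ) {q : ℂ} (hq : q ≠ 0) :
    weightAt (p / q) = (2 * (p * conj q).im)⁻¹ • weightNumerator p q := by
  have hq' : normSq q ≠ 0 := normSq_eq_zero.not.mpr hq
  ext i j
  fin_cases i <;> fin_cases j <;> simp [weightAt, weightNumerator, div_re, div_im] <;>
    field_simp <;> ring

theorem weightAt_eq_smul_weightNumerator (z : ℂ) :
    weightAt z = (2 * z.im)⁻¹ • weightNumerator z 1 := by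
  simpa using weightAt_div z one_ne_zero

theorem weightNumerator_linear (g : Matrix (Fin 2) (Fin 2) ℝ) (z : ℂ) :
    weightNumerator (g 0 0 * z + g 0 1) (g 1 0 * z + g 1 1) =
      g.adjugateᵀ * weightNumerator z 1 * g.adjugate := by
  rw [adjugate_fin_two]
  ext i j
  fin_cases i <;> fin_cases j <;>
    simp [weightNumerator, normSq_apply, mul_apply, Fin.sum_univ_two] <;> ring

theorem im_linear_mul_conj (g : Matrix (Fin 2) (Fin 2) ℝ) (z : ℂ) :
    ((g 0 0 * z + g 0 1) * conj (g 1 0 * z + g 1 1)).im = g.det * z.im := by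
  simp [det_fin_two]
  ring

theorem mobiusAct_im (g : Matrix (Fin 2) (Fin 2) ℝ) (z : ℂ) :
    (mobiusAct g z).im = g.det * z.im / normSq (g 1 0 * z + g 1 1) := by
  simp [mobiusAct, div_im, det_fin_two]
  ring

theorem mobiusAct_denom_ne_zero {g : Matrix (Fin 2) (Fin 2) ℝ} (hg : g.det ≠ 0) {z : ℂ}
    (hz : z.im ≠ 0) : (g 1 0 : ℂ) * z + g 1 1 ≠ 0 := by
  intro h
  have hc : g 1 0 = 0 := by
    have him : g 1 0 * z.im = 0 := by simpa using congrArg Complex.im h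
    exact (mul_eq_zero.mp him).resolve_right hz
  have hd : g 1 1 = 0 := by simpa [hc] using h
  exact hg (by simp [det_fin_two, hc, hd])

theorem mobiusAct_im_pos {g : Matrix (Fin 2) (Fin 2) ℝ} (hg : 0 < g.det) {z : ℂ}
    (hz : 0 < z.im) : 0 < (mobiusAct g z).im := by
  have hD := normSq_pos.mpr (mobiusAct_denom_ne_zero hg.ne' hz.ne')
  rw [mobiusAct_im]
  positivity

theorem weightAt_mobiusAct {g : Matrix (Fin 2) (Fin 2) ℝ} (hg : g.det = 1) {z : ℂ}
    (hz : z.im ≠ 0) : weightAt (mobiusAct g z) = (g⁻¹)ᵀ * weightAt z * g⁻¹ := by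
  rw [mobiusAct, weightAt_div _ (mobiusAct_denom_ne_zero (hg ▸ one_ne_zero) hz),
    im_linear_mul_conj, weightNumerator_linear, weightAt_eq_smul_weightNumerator,
    Matrix.inv_def, hg, Ring.inverse_one, one_smul, one_mul]
  simp only [Matrix.mul_smul, Matrix.smul_mul]

theorem dotProduct_mulVec_conj {n R : Type*} [Fintype n] [DecidableEq n] [CommRing R]
    {Q : Matrix n n R} (hQ : Qᵀ * Q = 1) (A : Matrix n n R) (u v : n → R) :
    (Q *ᵥ u) ⬝ᵥ ((Q * A * Qᵀ) *ᵥ (Q *ᵥ v)) = u ⬝ᵥ (A *ᵥ v) := by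
  rw [mulVec_mulVec, Matrix.mul_assoc (Q * A), hQ, Matrix.mul_one, ← mulVec_mulVec,
    dotProduct_mulVec, vecMul_mulVec, ← mulVec_transpose, hQ, transpose_one, one_mulVec]

/-- for `Q ∈ SO(2)` and a Dirac operator with generating path `x+iy`
and weight `R`, the conjugated operator `QτQ⁻¹` is the Dirac operator with
generating path `𝒬(x+iy)`, weight `QRQᵀ` and boundary conditions `Q𝔲₀, Q𝔲₁`;
in particular the integral traces agree:
`∫₀¹ 𝔲₀ᵀ R 𝔲₁ = ∫₀¹ (Q𝔲₀)ᵀ (QRQᵀ) (Q𝔲₁)`. -/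
theorem dirac_rotation_equivalence
    (Q : Matrix (Fin 2) (Fin 2) ℝ) (hQ : Qᵀ * Q = 1) (hdet : Q.det = 1)
    (x y : ℝ → ℝ) (hy : ∀ t, 0 < y t) (u0 u1 : Fin 2 → ℝ) :
    (∀ t, 0 < (mobiusAct Q (x t + y t * Complex.I)).im) ∧
    (∀ t, diracWeight (fun s => (mobiusAct Q (x s + y s * Complex.I)).re)
        (fun s => (mobiusAct Q (x s + y s * Complex.I)).im) t
      = Q * diracWeight x y t * Qᵀ) ∧
    (∫ t in Set.Ioo (0 : ℝ) 1, u0 ⬝ᵥ (diracWeight x y t *ᵥ u1)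
      = ∫ t in Set.Ioo (0 : ℝ) 1,
          (Q *ᵥ u0) ⬝ᵥ ((Q * diracWeight x y t * Qᵀ) *ᵥ (Q *ᵥ u1))) := by
  have hQinv : Q⁻¹ = Qᵀ := inv_eq_left_inv hQ
  refine ⟨fun t => mobiusAct_im_pos (hdet ▸ one_pos) (by simpa using hy t), fun t => ?_, ?_⟩
  · rw [diracWeight_eq_weightAt, re_add_im, weightAt_mobiusAct hdet (by simpa using (hy t).ne'),
      hQinv, transpose_transpose, ← diracWeight_eq_weightAt]
  · simp_rw [dotProduct_mulVec_conj hQ]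
end

section
/- Let γ_0,…,γ_{n-1} be points in the open unit disk and let b_k = A_{γ_0,𝔻}^{-1} ∘ ⋯ ∘ A_{γ_{k-1},𝔻}^{-1}(0) be the associated path. Define b'_k = A_{b̂_{n-1},𝔻}(b̂_{n-1-k}) where b̂_{-1} = 1 and b̂_k, 0≤k≤n-1, is the path produced by the coefficients γ̄_{n-2}, γ̄_{n-3}, …, γ̄_0. Then b'_k, 0≤k≤n-1, coincides with the first n elements of the path produced by the coefficients γ̄_0^ι, γ̄_1^ι, …, γ̄_{n-2}^ι, where γ^ι = -γ(1-γ̄)/(1-γ). -/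
/-!
Let `m = n - 1`, let `c` be the reversed coefficients and `G = A_{c_0}⁻¹ ∘ ⋯ ∘ A_{c_{m-1}}⁻¹`,
so that `b̂_m = G 0`. The target path `p` has coefficients `γ̄_j^ι = c_{m-1-j}^ι`, so its first
`k` maps are `A_{c_{m-1}}, …, A_{c_{m-k}}`; they undo the last `k` factors of `G`, whence
`G (p_k) = b̂_{m-k}`. It remains to see `A_{G 0} ∘ G = id`. For every automorphism `φ = A_b`,
`A_{φ u} ∘ φ = A_u` (both sides fix `1` and send `u` to `0`); peeling off the factors of `G`
one at a time ends at `A_0 = id`.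
-/

open Complex

/-- The disk automorphism `A_{γ,𝔻}(z) = ((z-γ)/(1-γ̄z))·((1-γ̄)/(1-γ))` fixing `1`. -/
noncomputable def diskMob (γ z : ℂ) : ℂ :=
  ((z - γ) / (1 - starRingEnd ℂ γ * z)) * ((1 - starRingEnd ℂ γ) / (1 - γ))

/-- The path `b_k = A_{c_0,𝔻}⁻¹ ∘ ⋯ ∘ A_{c_{k-1},𝔻}⁻¹(0)` produced by a sequence of
(modified Verblunsky) coefficients `c`, using `A_{γ,𝔻}⁻¹ = A_{γ^ι,𝔻}`. -/
noncomputable def diskPath : (ℕ → ℂ) → ℕ → ℂ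
  | _, 0 => 0
  | c, (k + 1) => diskMob (diskIota (c 0)) (diskPath (fun j => c (j + 1)) k)

open ComplexConjugate

lemma one_sub_ne_zero_of_norm_lt_one {x : ℂ} (hx : ‖x‖ < 1) : 1 - x ≠ 0 :=
  sub_ne_zero.2 fun h => by simp [← h] at hx

lemma one_sub_mul_ne_zero_of_norm_lt_one {x y : ℂ} (hx : ‖x‖ < 1) (hy : ‖y‖ < 1) :
    1 - x * y ≠ 0 :=
  one_sub_ne_zero_of_norm_lt_one <| by
    rw [norm_mul]; exact mul_lt_one_of_nonneg_of_lt_one_left (norm_nonneg x) hx hy.le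

lemma norm_one_sub_conj (γ : ℂ) : ‖1 - conj γ‖ = ‖1 - γ‖ := by
  rw [← norm_conj, map_sub, map_one, conj_conj]

lemma normSq_one_sub_conj_mul_sub_normSq_sub (γ z : ℂ) :
    normSq (1 - conj γ * z) - normSq (z - γ) = (1 - normSq γ) * (1 - normSq z) := by
  simp only [normSq_apply, sub_re, sub_im, mul_re, mul_im, conj_re, conj_im, one_re, one_im]
  ring

lemma norm_diskIota {γ : ℂ} (hγ : ‖γ‖ < 1) : ‖diskIota γ‖ = ‖γ‖ := by
  have h : ‖1 - γ‖ ≠ 0 := norm_ne_zero_iff.2 (one_sub_ne_zero_of_norm_lt_one hγ)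
  rw [diskIota, norm_div, norm_mul, norm_neg, norm_one_sub_conj, mul_div_cancel_right₀ _ h]

lemma norm_diskIota_lt_one {γ : ℂ} (hγ : ‖γ‖ < 1) : ‖diskIota γ‖ < 1 := by
  rwa [norm_diskIota hγ]

lemma norm_diskMob_lt_one {γ z : ℂ} (hγ : ‖γ‖ < 1) (hz : ‖z‖ < 1) : ‖diskMob γ z‖ < 1 := by
  have hden : 1 - conj γ * z ≠ 0 := one_sub_mul_ne_zero_of_norm_lt_one (by rwa [norm_conj]) hz
  have hunit : ‖(1 - conj γ) / (1 - γ)‖ = 1 := by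
    rw [norm_div, norm_one_sub_conj,
      div_self (norm_ne_zero_iff.2 (one_sub_ne_zero_of_norm_lt_one hγ))]
  rw [diskMob, norm_mul, hunit, mul_one, norm_div, div_lt_one (norm_pos_iff.2 hden),
    ← sq_lt_sq₀ (norm_nonneg _) (norm_nonneg _), Complex.sq_norm, Complex.sq_norm, ← sub_pos,
    normSq_one_sub_conj_mul_sub_normSq_sub, ← Complex.sq_norm, ← Complex.sq_norm]
  have hγ2 : ‖γ‖ ^ 2 < 1 := pow_lt_one₀ (norm_nonneg γ) hγ two_ne_zero
  have hz2 : ‖z‖ ^ 2 < 1 := pow_lt_one₀ (norm_nonneg z) hz two_ne_zero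
  exact mul_pos (sub_pos.2 hγ2) (sub_pos.2 hz2)

lemma one_sub_conj_ne_zero {b : ℂ} (hb : 1 - b ≠ 0) : 1 - conj b ≠ 0 := by
  rwa [← map_one (starRingEnd ℂ), ← map_sub, map_ne_zero]

lemma diskMob_one {b : ℂ} (hb : 1 - b ≠ 0) : diskMob b 1 = 1 := by
  rw [diskMob, mul_one, div_mul_div_cancel₀ (one_sub_conj_ne_zero hb), div_self hb]

lemma diskMob_sub_diskMob {b u z : ℂ} (hu : 1 - conj b * u ≠ 0) (hz : 1 - conj b * z ≠ 0) :
    diskMob b z - diskMob b u = (1 - conj b * b) * (z - u) /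
      ((1 - conj b * z) * (1 - conj b * u)) * ((1 - conj b) / (1 - b)) := by
  rw [diskMob, diskMob, ← sub_mul, div_sub_div _ _ hz hu]
  ring

lemma one_sub_conj_diskMob_mul_diskMob {b u z : ℂ} (hb : 1 - b ≠ 0) (hu : 1 - b * conj u ≠ 0) (hz : 1 - conj b * z ≠ 0) :
    1 - conj (diskMob b u) * diskMob b z =
      (1 - conj b * b) * (1 - conj u * z) / ((1 - b * conj u) * (1 - conj b * z)) := by
  have hprod : conj (diskMob b u) * diskMob b z =
      (conj u - conj b) * (z - b) / ((1 - b * conj u) * (1 - conj b * z)) := by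
    have hb' := one_sub_conj_ne_zero hb
    simp only [diskMob, map_mul, map_div₀, map_sub, map_one, conj_conj]
    field_simp
  rw [hprod, one_sub_div (mul_ne_zero hu hz)]
  ring

lemma diskMob_diskMob_diskMob {b u z : ℂ} (hb : ‖b‖ < 1) (hu : ‖u‖ < 1) (hz : ‖z‖ < 1) :
    diskMob (diskMob b u) (diskMob b z) = diskMob u z := by
  have hb' : ‖conj b‖ < 1 := by rwa [norm_conj]
  have hu' : ‖conj u‖ < 1 := by rwa [norm_conj]
  have h1b := one_sub_ne_zero_of_norm_lt_one hb
  have h1b' := one_sub_conj_ne_zero h1b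
  have hbb := one_sub_mul_ne_zero_of_norm_lt_one hb' hb
  have hbu := one_sub_mul_ne_zero_of_norm_lt_one hb' hu
  have hbu' := one_sub_mul_ne_zero_of_norm_lt_one hb hu'
  have hbz := one_sub_mul_ne_zero_of_norm_lt_one hb' hz
  have hb1 : 1 - conj b * 1 ≠ 0 := by rwa [mul_one]
  have hw := diskMob_sub_diskMob hbu hb1
  have hw' := one_sub_conj_diskMob_mul_diskMob h1b hbu' hb1
  -- `1 - w` and `1 - conj w` for `w = A_b u` are the cases `z = 1` of the two identities.
  rw [diskMob_one h1b, mul_one] at hw hw'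
  calc diskMob (diskMob b u) (diskMob b z)
      = (diskMob b z - diskMob b u) / (1 - conj (diskMob b u) * diskMob b z) *
          ((1 - conj (diskMob b u)) / (1 - diskMob b u)) := rfl
    _ = diskMob u z := by
      rw [diskMob_sub_diskMob hbu hbz, one_sub_conj_diskMob_mul_diskMob h1b hbu' hbz,
        hw, hw', diskMob]
      field_simp

lemma diskMob_zero_left (z : ℂ) : diskMob 0 z = z := by simp [diskMob]

lemma diskMob_zero_right (γ : ℂ) : diskMob γ 0 = diskIota γ := by
  simp [diskMob, diskIota, mul_div_assoc, neg_div]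

lemma diskMob_self (γ : ℂ) : diskMob γ γ = 0 := by simp [diskMob]

lemma diskMob_diskIota_diskMob {γ w : ℂ} (hγ : ‖γ‖ < 1) (hw : ‖w‖ < 1) :
    diskMob (diskIota γ) (diskMob γ w) = w := by
  simpa only [diskMob_zero_right, diskMob_zero_left] using
    diskMob_diskMob_diskMob hγ (norm_zero.trans_lt one_pos) hw

lemma diskIota_diskIota {γ : ℂ} (hγ : ‖γ‖ < 1) : diskIota (diskIota γ) = γ := by
  rw [← diskMob_zero_right, ← diskMob_self γ, diskMob_diskIota_diskMob hγ hγ]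

/-- `diskPathMap c m = A_{c_0,𝔻}⁻¹ ∘ ⋯ ∘ A_{c_{m-1},𝔻}⁻¹`. -/
noncomputable def diskPathMap : (ℕ → ℂ) → ℕ → ℂ → ℂ
  | _, 0, z => z
  | c, m + 1, z => diskMob (diskIota (c 0)) (diskPathMap (fun j => c (j + 1)) m z)

lemma diskPath_eq_diskPathMap_zero (c : ℕ → ℂ) (m : ℕ) : diskPath c m = diskPathMap c m 0 := by
  induction m generalizing c with
  | zero => rfl
  | succ m ih => rw [diskPath, diskPathMap, ih]

lemma diskPathMap_succ' (c : ℕ → ℂ) (m : ℕ) (z : ℂ) :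
    diskPathMap c (m + 1) z = diskPathMap c m (diskMob (diskIota (c m)) z) := by
  induction m generalizing c with
  | zero => rfl
  | succ m ih => rw [diskPathMap, ih, ← diskPathMap]

lemma diskPath_congr {c c' : ℕ → ℂ} (m : ℕ) (h : ∀ j < m, c j = c' j) :
    diskPath c m = diskPath c' m := by
  induction m generalizing c c' with
  | zero => rfl
  | succ m ih => rw [diskPath, diskPath, h 0 m.succ_pos, ih fun j hj => h (j + 1) (by omega)]

lemma norm_diskPathMap_lt_one {c : ℕ → ℂ} {z : ℂ} (m : ℕ) (h : ∀ j < m, ‖c j‖ < 1)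
    (hz : ‖z‖ < 1) : ‖diskPathMap c m z‖ < 1 := by
  induction m generalizing c with
  | zero => exact hz
  | succ m ih =>
    have hc₀ := h 0 m.succ_pos
    exact norm_diskMob_lt_one (norm_diskIota_lt_one hc₀)
      (ih fun j hj => h (j + 1) (by omega))

lemma norm_diskPath_lt_one {c : ℕ → ℂ} (m : ℕ) (h : ∀ j < m, ‖c j‖ < 1) :
    ‖diskPath c m‖ < 1 := by
  rw [diskPath_eq_diskPathMap_zero]
  exact norm_diskPathMap_lt_one m h (by simp)

lemma diskMob_diskPathMap_zero_diskPathMap {c : ℕ → ℂ} {z : ℂ} (m : ℕ)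
    (h : ∀ j < m, ‖c j‖ < 1) (hz : ‖z‖ < 1) :
    diskMob (diskPathMap c m 0) (diskPathMap c m z) = z := by
  induction m generalizing c with
  | zero => exact diskMob_zero_left z
  | succ m ih =>
    have hc₀ := h 0 m.succ_pos
    have htail : ∀ j < m, ‖c (j + 1)‖ < 1 := fun j hj => h (j + 1) (by omega)
    rw [diskPathMap, diskPathMap, diskMob_diskMob_diskMob (norm_diskIota_lt_one hc₀)
      (norm_diskPathMap_lt_one m htail (by simp)) (norm_diskPathMap_lt_one m htail hz)]
    exact ih htail

lemma diskPathMap_diskPath_diskIota_rev {c : ℕ → ℂ} {m k : ℕ} (h : ∀ j < m, ‖c j‖ < 1)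
    (hk : k ≤ m) :
    diskPathMap c m (diskPath (fun j => diskIota (c (m - 1 - j))) k) = diskPath c (m - k) := by
  induction k generalizing m with
  | zero => rw [diskPath, Nat.sub_zero, diskPath_eq_diskPathMap_zero]
  | succ k ih =>
    obtain ⟨m, rfl⟩ : ∃ m', m = m' + 1 := ⟨m - 1, by omega⟩
    have hcm := h m m.lt_succ_self
    have hrev : diskPath (fun j => diskIota (c (m + 1 - 1 - j))) (k + 1) =
        diskMob (c m) (diskPath (fun j => diskIota (c (m - 1 - j))) k) := by
      rw [diskPath, Nat.add_sub_cancel, Nat.sub_zero, diskIota_diskIota hcm]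
      exact congrArg _ (diskPath_congr k fun j _ => by rw [Nat.sub_add_eq, Nat.sub_right_comm])
    have hpath : ‖diskPath (fun j => diskIota (c (m - 1 - j))) k‖ < 1 :=
      norm_diskPath_lt_one k fun j _ => norm_diskIota_lt_one (h (m - 1 - j) (by omega))
    rw [hrev, diskPathMap_succ', diskMob_diskIota_diskMob hcm hpath,
      ih (fun j hj => h j (by omega)) (by omega), Nat.add_sub_add_right]

theorem pulled_back_path_eq_general
    (n : ℕ) (γ : ℕ → ℂ)
    (hγ : ∀ j, j ≤ n - 2 → ‖γ j‖ < 1) :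
    ∀ k, k ≤ n - 1 →
      diskMob (diskPath (fun j => starRingEnd ℂ (γ (n - 2 - j))) (n - 1))
          (diskPath (fun j => starRingEnd ℂ (γ (n - 2 - j))) (n - 1 - k))
        = diskPath (fun j => diskIota (starRingEnd ℂ (γ j))) k := by
  intro k hk
  set c : ℕ → ℂ := fun j => conj (γ (n - 2 - j))
  have hc : ∀ j < n - 1, ‖c j‖ < 1 := fun j _ => by
    simpa [c, norm_conj] using hγ (n - 2 - j) (Nat.sub_le _ _)
  have hrev : ∀ j < k, diskIota (c (n - 1 - 1 - j)) = diskIota (conj (γ j)) := fun j hj => by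
    simp only [c, show n - 2 - (n - 1 - 1 - j) = j by omega]
  rw [← diskPathMap_diskPath_diskIota_rev hc hk, diskPath_eq_diskPathMap_zero,
    diskMob_diskPathMap_zero_diskPathMap (n - 1) hc, diskPath_congr k hrev]
  exact norm_diskPath_lt_one k fun j hj =>
    hrev j hj ▸ norm_diskIota_lt_one (by rw [norm_conj]; exact hγ j (by omega))

/-- pulling back the reversed path through the automorphism sending
`b̂_{n-1}` to `0` produces the path generated by the coefficients
`γ̄_0^ι, γ̄_1^ι, …, γ̄_{n-2}^ι`. -/
theorem pulled_back_path_eq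
    (n : ℕ) (hn : 1 ≤ n) (γ : ℕ → ℂ)
    (hγ : ∀ j, j ≤ n - 2 → ‖γ j‖ < 1) :
    ∀ k, k ≤ n - 1 →
      diskMob (diskPath (fun j => starRingEnd ℂ (γ (n - 2 - j))) (n - 1))
          (diskPath (fun j => starRingEnd ℂ (γ (n - 2 - j))) (n - 1 - k))
        = diskPath (fun j => diskIota (starRingEnd ℂ (γ j))) k :=
  pulled_back_path_eq_general n γ hγ
end

section
/- Let z_1,…,z_n be the eigenvalues of the CMV matrix C(α_0,…,α_{n-1}) with α_k ∈ 𝔻 for all k (so the matrix is a strict contraction truncation), related to modified Verblunsky coefficients γ_k by the recursion γ_k = ᾱ_k ∏_{j<k}(1-γ̄_j)/(1-γ_j). Then ∏_{j=0}^{n-1}(1-γ_j) = ∏_{j=1}^n (1-z_j) and ∏_{j=0}^{n-1}(1-γ̄_j) = ∏_{j=1}^n (1-z̄_j). -/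
/-!
Write `C = LM`. For even `n` every block of `L` is a full unitary `Ξ_k`, and `L` is symmetric, so
`L⁻¹ = L̄` and `det (1 - LM) = det L · det (L̄ - M)`; for odd `n` the same holds with `L` and `M`
exchanged, after `det (1 - LM) = det (1 - ML)`. The matrix `L̄ - M` is symmetric tridiagonal with
off-diagonal entries `±ρ_k`, and since `ρ_k² = 1 - |α_k|²` the three-term recursion for its leading
minors is, up to signs and a conjugation on odd sizes, Szegő's recursion
`Φ_{k+1}(1) = Φ_k(1) - ᾱ_k Φ_k(1)‾`; hence `det (1 - C) = Φ_n(1)`. The modified Verblunsky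
coefficients are made so that `P_k = ∏_{j<k} (1 - γ_j)` satisfies the same recursion:
`γ_k = ᾱ_k P̄_k / P_k`.
-/
open Complex Matrix Finset

noncomputable def cmvRho (α : ℕ → ℂ) (k : ℕ) : ℂ :=
  ((Real.sqrt (1 - ‖α k‖ ^ 2) : ℝ) : ℂ)

/-- The matrix `L = diag(Ξ_0, Ξ_2, …)` of the CMV factorization, where
`Ξ_k = [[ᾱ_k, ρ_k],[ρ_k, -α_k]]` occupies rows/columns `k, k+1`. -/
noncomputable def cmvL (n : ℕ) (α : ℕ → ℂ) : Matrix (Fin n) (Fin n) ℂ := fun i j =>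
  if i.val = j.val then
    (if i.val % 2 = 0 then starRingEnd ℂ (α i.val) else -α (i.val - 1))
  else if j.val = i.val + 1 ∧ i.val % 2 = 0 then cmvRho α i.val
  else if i.val = j.val + 1 ∧ j.val % 2 = 0 then cmvRho α j.val
  else 0

/-- The matrix `M = diag(Ξ_{-1}, Ξ_1, Ξ_3, …)` of the CMV factorization,
with `Ξ_{-1} = (1)`. -/
noncomputable def cmvM (n : ℕ) (α : ℕ → ℂ) : Matrix (Fin n) (Fin n) ℂ := fun i j =>
  if i.val = j.val then
    (if i.val = 0 then 1
     else if i.val % 2 = 1 then starRingEnd ℂ (α i.val) else -α (i.val - 1))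
  else if j.val = i.val + 1 ∧ i.val % 2 = 1 then cmvRho α i.val
  else if i.val = j.val + 1 ∧ j.val % 2 = 1 then cmvRho α j.val
  else 0

/-- The CMV matrix `C(α_0,…,α_{n-1}) = LM`. -/
noncomputable def cmvMatrix (n : ℕ) (α : ℕ → ℂ) : Matrix (Fin n) (Fin n) ℂ :=
  cmvL n α * cmvM n α


open ComplexConjugate

namespace Matrix

variable {R : Type*} [CommRing R]

theorem det_one_sub_mul_of_mul_eq_one {ι : Type*} [Fintype ι] [DecidableEq ι]
    {A B C : Matrix ι ι R} (h : A * C = 1) : det (1 - A * B) = det A * det (C - B) := by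
  rw [← det_mul, Matrix.mul_sub, h]

def symmTridiag (d e : ℕ → R) (n : ℕ) : Matrix (Fin n) (Fin n) R :=
  of fun i j =>
    if (i : ℕ) = j then d i
    else if (i : ℕ) + 1 = j then e i
    else if (j : ℕ) + 1 = i then e j
    else 0

variable (d e : ℕ → R)

theorem symmTridiag_apply_self {n : ℕ} (i : Fin n) : symmTridiag d e n i i = d i := by
  simp [symmTridiag]

theorem symmTridiag_apply_of_eq_add_one {n : ℕ} {i j : Fin n} (h : (i : ℕ) + 1 = j) :
    symmTridiag d e n i j = e i := by
  simp only [symmTridiag, of_apply]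
  rw [if_neg (by omega), if_pos h]

theorem symmTridiag_apply_of_add_one_eq {n : ℕ} {i j : Fin n} (h : (j : ℕ) + 1 = i) :
    symmTridiag d e n i j = e j := by
  simp only [symmTridiag, of_apply]
  rw [if_neg (by omega), if_neg (by omega), if_pos h]

theorem symmTridiag_apply_eq_zero {n : ℕ} {i j : Fin n}
    (hij : (i : ℕ) + 1 < j ∨ (j : ℕ) + 1 < i) : symmTridiag d e n i j = 0 := by
  simp only [symmTridiag, of_apply]
  rw [if_neg (by omega), if_neg (by omega), if_neg (by omega)]

theorem symmTridiag_submatrix_castSucc (n : ℕ) :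
    (symmTridiag d e (n + 1)).submatrix Fin.castSucc Fin.castSucc = symmTridiag d e n := by
  ext i j
  simp [symmTridiag]

theorem det_symmTridiag_add_two (n : ℕ) :
    det (symmTridiag d e (n + 2)) =
      d (n + 1) * det (symmTridiag d e (n + 1)) - e n ^ 2 * det (symmTridiag d e n) := by
  -- the minor at (last row, second-to-last column) has a single nonzero entry in its last column
  have hminor : det ((symmTridiag d e (n + 2)).submatrix Fin.castSucc
      (Fin.last n).castSucc.succAbove) = e n * det (symmTridiag d e n) := by
    rw [det_succ_column _ (Fin.last n), Fin.sum_univ_castSucc, Finset.sum_eq_zero fun i _ => by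
      rw [submatrix_apply, symmTridiag_apply_eq_zero _ _ (by simp), mul_zero, zero_mul]]
    have hsub : ((symmTridiag d e (n + 2)).submatrix Fin.castSucc
        (Fin.last n).castSucc.succAbove).submatrix (Fin.last n).succAbove (Fin.last n).succAbove =
        symmTridiag d e n := by
      ext i j
      simp [Fin.succAbove_castSucc_of_lt _ _ (Fin.castSucc_lt_last _), symmTridiag]
    rw [hsub, submatrix_apply, symmTridiag_apply_of_eq_add_one _ _ (by simp)]
    simp [← two_mul]
  rw [det_succ_row _ (Fin.last _), Fin.sum_univ_castSucc, Fin.sum_univ_castSucc,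
    Finset.sum_eq_zero fun i _ => by
      rw [symmTridiag_apply_eq_zero _ _ (by simp), mul_zero, zero_mul]]
  rw [Fin.succAbove_last, hminor, symmTridiag_submatrix_castSucc, symmTridiag_apply_self,
    symmTridiag_apply_of_add_one_eq _ _ (by simp)]
  simp [← two_mul, pow_succ]
  ring

end Matrix

def finTwoMulEquiv (m : ℕ) : Fin (2 * m) ≃ Fin 2 × Fin m :=
  (finCongr (mul_comm 2 m)).trans (finProdFinEquiv.symm.trans (Equiv.prodComm _ _))

theorem finTwoMulEquiv_symm_apply_val (m : ℕ) (r : Fin 2) (a : Fin m) :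
    ((finTwoMulEquiv m).symm (r, a) : ℕ) = r + 2 * a := by
  simp [finTwoMulEquiv]

theorem Complex.norm_conj_div_self {z : ℂ} (hz : z ≠ 0) : ‖conj z / z‖ = 1 := by
  rw [norm_div, norm_conj, div_self (norm_ne_zero_iff.mpr hz)]

@[simp] theorem conj_cmvRho (α : ℕ → ℂ) (k : ℕ) : conj (cmvRho α k) = cmvRho α k :=
  conj_ofReal _

theorem cmvRho_sq {α : ℕ → ℂ} {k : ℕ} (h : ‖α k‖ ≤ 1) :
    cmvRho α k ^ 2 = 1 - α k * conj (α k) := by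
  rw [cmvRho, ← ofReal_pow, Real.sq_sqrt (by nlinarith [norm_nonneg (α k)]), mul_conj,
    normSq_eq_norm_sq]
  push_cast
  ring

noncomputable def cmvXi (α : ℕ → ℂ) (k : ℕ) : Matrix (Fin 2) (Fin 2) ℂ :=
  !![conj (α k), cmvRho α k; cmvRho α k, -α k]

theorem cmvXi_mul_map_conj {α : ℕ → ℂ} {k : ℕ} (h : ‖α k‖ ≤ 1) :
    cmvXi α k * (cmvXi α k).map conj = 1 := by
  have hρ := cmvRho_sq h
  ext i j
  fin_cases i <;> fin_cases j <;> simp [cmvXi, mul_apply] <;>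
    first | ring1 | linear_combination hρ

theorem det_cmvXi {α : ℕ → ℂ} {k : ℕ} (h : ‖α k‖ ≤ 1) : det (cmvXi α k) = -1 := by
  rw [cmvXi, det_fin_two_of]
  linear_combination -cmvRho_sq h

theorem cmvL_two_mul_eq_blockDiagonal (m : ℕ) (α : ℕ → ℂ) :
    cmvL (2 * m) α = (blockDiagonal fun a : Fin m => cmvXi α (2 * a)).submatrix
      (finTwoMulEquiv m) (finTwoMulEquiv m) := by
  ext i j
  obtain ⟨⟨r, a⟩, rfl⟩ := (finTwoMulEquiv m).symm.surjective i
  obtain ⟨⟨s, b⟩, rfl⟩ := (finTwoMulEquiv m).symm.surjective j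
  simp only [submatrix_apply, Equiv.apply_symm_apply, blockDiagonal_apply', cmvL,
    finTwoMulEquiv_symm_apply_val]
  fin_cases r <;> fin_cases s <;> simp [cmvXi, Fin.ext_iff] <;> split_ifs <;>
    first | rfl | omega | simp only [show (b : ℕ) = a by omega]

theorem cmvL_two_mul_mul_map_conj {m : ℕ} {α : ℕ → ℂ} (hα : ∀ k < 2 * m, ‖α k‖ ≤ 1) :
    cmvL (2 * m) α * (cmvL (2 * m) α).map conj = 1 := by
  have hblock (a : Fin m) : cmvXi α (2 * a) * (cmvXi α (2 * a)).map conj = 1 :=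
    cmvXi_mul_map_conj (hα _ (by omega))
  rw [cmvL_two_mul_eq_blockDiagonal, ← submatrix_map, submatrix_mul_equiv,
    blockDiagonal_map _ _ (map_zero _), ← blockDiagonal_mul]
  simp [hblock, ← Pi.one_def, blockDiagonal_one]

theorem det_cmvL_two_mul {m : ℕ} {α : ℕ → ℂ} (hα : ∀ k < 2 * m, ‖α k‖ ≤ 1) :
    det (cmvL (2 * m) α) = (-1) ^ m := by
  have hblock (a : Fin m) : det (cmvXi α (2 * a)) = -1 := det_cmvXi (hα _ (by omega))
  rw [cmvL_two_mul_eq_blockDiagonal, det_submatrix_equiv_self, det_blockDiagonal]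
  simp [hblock]

theorem cmvM_succ_zero_zero (n : ℕ) (α : ℕ → ℂ) : cmvM (n + 1) α 0 0 = 1 := by
  simp [cmvM]

theorem cmvM_succ_zero_succ (n : ℕ) (α : ℕ → ℂ) (j : Fin n) : cmvM (n + 1) α 0 j.succ = 0 := by
  simp [cmvM]

theorem cmvM_succ_succ_zero (n : ℕ) (α : ℕ → ℂ) (i : Fin n) : cmvM (n + 1) α i.succ 0 = 0 := by
  simp [cmvM]

theorem cmvM_succ_succ_succ (n : ℕ) (α : ℕ → ℂ) (i j : Fin n) :
    cmvM (n + 1) α i.succ j.succ = cmvL n (fun k => α (k + 1)) i j := by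
  simp only [cmvM, cmvL, Fin.val_succ]
  split_ifs <;> first | rfl | omega | contradiction | (congr 2; omega)

theorem det_cmvM_succ (n : ℕ) (α : ℕ → ℂ) :
    det (cmvM (n + 1) α) = det (cmvL n (fun k => α (k + 1))) := by
  rw [det_succ_row_zero, Fin.sum_univ_succ]
  simp only [cmvM_succ_zero_zero, cmvM_succ_zero_succ, zero_mul, mul_zero, Finset.sum_const_zero,
    add_zero, Fin.val_zero, pow_zero, one_mul, Fin.succAbove_zero]
  congr 1
  ext i j
  exact cmvM_succ_succ_succ n α i j

theorem cmvM_succ_mul_map_conj {n : ℕ} {α : ℕ → ℂ}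
    (h : cmvL n (fun k => α (k + 1)) * (cmvL n (fun k => α (k + 1))).map conj = 1) :
    cmvM (n + 1) α * (cmvM (n + 1) α).map conj = 1 := by
  ext i j
  have hsucc (i j : Fin n) := congrFun (congrFun h i) j
  cases i using Fin.cases <;> cases j using Fin.cases <;>
    simp_all [mul_apply, one_apply, Fin.sum_univ_succ, cmvM_succ_zero_zero, cmvM_succ_zero_succ,
      cmvM_succ_succ_zero, cmvM_succ_succ_succ, (Fin.succ_ne_zero _).symm]

noncomputable def cmvJDiag (α : ℕ → ℂ) (i : ℕ) : ℂ :=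
  if i = 0 then α i - 1
  else if i % 2 = 1 then -(conj (α (i - 1)) + conj (α i))
  else α i + α (i - 1)

noncomputable def cmvJOff (α : ℕ → ℂ) (i : ℕ) : ℂ :=
  if i % 2 = 0 then cmvRho α i else -cmvRho α i

noncomputable abbrev cmvJ (n : ℕ) (α : ℕ → ℂ) : Matrix (Fin n) (Fin n) ℂ :=
  symmTridiag (cmvJDiag α) (cmvJOff α) n

theorem map_conj_cmvL_sub_cmvM (n : ℕ) (α : ℕ → ℂ) :
    (cmvL n α).map conj - cmvM n α = cmvJ n α := by
  ext i j
  simp only [map_apply, Matrix.sub_apply, cmvL, cmvM, symmTridiag, of_apply, cmvJDiag, cmvJOff]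
  split_ifs <;> first | omega | (simp <;> ring)

theorem cmvJOff_sq {α : ℕ → ℂ} {k : ℕ} (h : ‖α k‖ ≤ 1) :
    cmvJOff α k ^ 2 = 1 - α k * conj (α k) := by
  rw [← cmvRho_sq h, cmvJOff]
  split_ifs <;> ring

/-- `Φ_k(1)`: Szegő's recursion `Φ_{k+1}(z) = z Φ_k(z) - ᾱ_k Φ_k^*(z)` at `z = 1`. -/
noncomputable def szegoAtOne (α : ℕ → ℂ) : ℕ → ℂ
  | 0 => 1
  | k + 1 => szegoAtOne α k - conj (α k) * conj (szegoAtOne α k)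

theorem det_cmvJ {α : ℕ → ℂ} (t : ℕ) (hα : ∀ k < 2 * t, ‖α k‖ ≤ 1) :
    det (cmvJ (2 * t) α) = (-1) ^ t * szegoAtOne α (2 * t) ∧
      det (cmvJ (2 * t + 1) α) = (-1) ^ (t + 1) * conj (szegoAtOne α (2 * t + 1)) := by
  induction t with
  | zero => simp [symmTridiag, cmvJDiag, szegoAtOne]
  | succ t ih =>
    obtain ⟨ih_even, ih_odd⟩ := ih fun k hk => hα k (by omega)
    have h_even : det (cmvJ (2 * t + 2) α) =
        (-1) ^ (t + 1) * szegoAtOne α (2 * t + 2) := by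
      rw [det_symmTridiag_add_two, ih_even, ih_odd, cmvJOff_sq (hα _ (by omega))]
      simp only [cmvJDiag, szegoAtOne, if_neg (show 2 * t + 1 ≠ 0 by omega),
        if_pos (show (2 * t + 1) % 2 = 1 by omega), Nat.add_sub_cancel, map_sub, map_mul,
        conj_conj]
      ring
    refine ⟨h_even, ?_⟩
    rw [show 2 * (t + 1) + 1 = 2 * t + 1 + 2 by ring, det_symmTridiag_add_two, h_even, ih_odd,
      cmvJOff_sq (hα _ (by omega))]
    simp only [cmvJDiag, szegoAtOne, if_neg (show 2 * t + 1 + 1 ≠ 0 by omega),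
      if_neg (show (2 * t + 1 + 1) % 2 ≠ 1 by omega), Nat.add_sub_cancel, map_sub, map_mul,
      conj_conj]
    ring

theorem det_one_sub_cmvMatrix {n : ℕ} {α : ℕ → ℂ} (hα : ∀ k < n, ‖α k‖ ≤ 1) :
    det (1 - cmvMatrix n α) = szegoAtOne α n := by
  obtain ⟨t, rfl | rfl⟩ := Nat.even_or_odd' n
  · rw [cmvMatrix, det_one_sub_mul_of_mul_eq_one (cmvL_two_mul_mul_map_conj hα),
      det_cmvL_two_mul hα, map_conj_cmvL_sub_cmvM, (det_cmvJ t hα).1, ← mul_assoc, ← mul_pow]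
    simp
  · have hshift : ∀ k < 2 * t, ‖α (k + 1)‖ ≤ 1 := fun k hk => hα (k + 1) (by omega)
    have hJ : (cmvM (2 * t + 1) α).map conj - cmvL (2 * t + 1) α =
        -(cmvJ (2 * t + 1) α).map conj := by
      rw [← map_conj_cmvL_sub_cmvM]
      ext i j
      simp
    rw [cmvMatrix, det_one_sub_mul_comm,
      det_one_sub_mul_of_mul_eq_one (cmvM_succ_mul_map_conj (cmvL_two_mul_mul_map_conj hshift)),
      det_cmvM_succ, det_cmvL_two_mul hshift, hJ, det_neg, ← RingHom.mapMatrix_apply,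
      ← RingHom.map_det, (det_cmvJ t fun k hk => hα k (by omega)).2]
    simp [pow_succ, pow_mul, ← mul_assoc, ← mul_pow]

def IsModifiedVerblunsky (n : ℕ) (α γ : ℕ → ℂ) : Prop :=
  ∀ k < n, γ k = conj (α k) * ∏ j ∈ range k, (1 - conj (γ j)) / (1 - γ j)

namespace IsModifiedVerblunsky

variable {n : ℕ} {α γ : ℕ → ℂ}

theorem norm_eq (hγ : IsModifiedVerblunsky n α γ) (hα : ∀ k < n, ‖α k‖ < 1) :
    ∀ k < n, ‖γ k‖ = ‖α k‖ := by
  intro k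
  induction k using Nat.strong_induction_on with
  | _ k ih =>
    intro hk
    have hunit : ∀ j ∈ range k, ‖(1 - conj (γ j)) / (1 - γ j)‖ = 1 := by
      intro j hj
      have hj : j < k := mem_range.mp hj
      have hγj : ‖γ j‖ < 1 := ih j hj (by omega) ▸ hα j (by omega)
      have hγj' : 1 - γ j ≠ 0 := sub_ne_zero.mpr fun h => by simp [← h] at hγj
      rw [show 1 - conj (γ j) = conj (1 - γ j) by simp]
      exact norm_conj_div_self hγj'
    rw [hγ k hk, norm_mul, norm_prod, prod_eq_one hunit, mul_one, norm_conj]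

theorem prod_one_sub_eq_szegoAtOne (hγ : IsModifiedVerblunsky n α γ)
    (hne : ∀ k < n, γ k ≠ 1) : ∀ k ≤ n, ∏ j ∈ range k, (1 - γ j) = szegoAtOne α k := by
  intro k hk
  induction k with
  | zero => rfl
  | succ k ih =>
    have hP : ∏ j ∈ range k, (1 - γ j) = szegoAtOne α k := ih (by omega)
    have hPconj : ∏ j ∈ range k, (1 - conj (γ j)) = conj (szegoAtOne α k) := by
      rw [← hP, map_prod]
      simp
    have hP0 : szegoAtOne α k ≠ 0 :=
      hP ▸ prod_ne_zero_iff.mpr fun j hj => sub_ne_zero.mpr (hne j (by simp at hj; omega)).symm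
    rw [prod_range_succ, hP, hγ k (by omega), prod_div_distrib, hP, hPconj, szegoAtOne]
    field_simp

end IsModifiedVerblunsky

/-- for the CMV matrix `C(α_0,…,α_{n-1})` with all `α_k ∈ 𝔻` and
modified Verblunsky coefficients `γ_k`, one has `∏_{j<n}(1-γ_j) = ∏_j (1-z_j)`
and `∏_{j<n}(1-γ̄_j) = ∏_j (1-z̄_j)`, where `z_j` are the eigenvalues of `C`;
equivalently `det(I - C) = ∏(1-γ_j)` and `conj(det(I - C)) = ∏(1-γ̄_j)`. -/
theorem cmv_det_one_sub_eq_prod_modified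
    (n : ℕ) (α γ : ℕ → ℂ)
    (hα : ∀ k, k < n → ‖α k‖ < 1)
    (hγ : ∀ k, k < n → γ k = starRingEnd ℂ (α k) *
      ∏ j ∈ Finset.range k, (1 - starRingEnd ℂ (γ j)) / (1 - γ j)) :
    Matrix.det (1 - cmvMatrix n α) = ∏ j ∈ Finset.range n, (1 - γ j) ∧
    starRingEnd ℂ (Matrix.det (1 - cmvMatrix n α))
      = ∏ j ∈ Finset.range n, (1 - starRingEnd ℂ (γ j)) := by
  have hmod : IsModifiedVerblunsky n α γ := hγ
  have hne : ∀ k < n, γ k ≠ 1 := fun k hk h => by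
    have := hmod.norm_eq hα k hk ▸ hα k hk
    simp [h] at this
  have hdet : det (1 - cmvMatrix n α) = szegoAtOne α n :=
    det_one_sub_cmvMatrix fun k hk => (hα k hk).le
  have hprod := hmod.prod_one_sub_eq_szegoAtOne hne n le_rfl
  refine ⟨hdet.trans hprod.symm, ?_⟩
  rw [hdet, ← hprod, map_prod]
  simp
end
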